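/- Let n be a positive integer and let r be a real number with 0 < r < n. Then cof(I^r_{n,σ-fin}) = 𝔠 = 2^{ℵ₀}: the least cardinality of a family C of subsets of ℝⁿ, each of σ-finite r-dimensional Hausdorff measure, such that every set of σ-finite r-dimensional Hausdorff measure is contained in some member of C, equals the cardinality of the continuum. -/

import Mathlib

open MeasureTheory Set
open scoped ENNReal MeasureTheory

noncomputable section


/-- A set `H ⊆ ℝⁿ` is of σ-finite `r`-dimensional Hausdorff measure if it is a countable
union of sets each of finite `r`-dimensional Hausdorff measure. -/
def SigmaFiniteHausdorff (n : ℕ) (r : ℝ) (H : Set (EuclideanSpace ℝ (Fin n))) : Prop :=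
  ∃ A : ℕ → Set (EuclideanSpace ℝ (Fin n)), H = ⋃ k, A k ∧ ∀ k, μH[r] (A k) < ⊤

/-- `cofOf J` is the least cardinality of a subfamily `C ⊆ J` such that every member of
`J` is contained in some member of `C`. -/
def cofOf {α : Type*} (J : Set (Set α)) : Cardinal :=
  sInf { c : Cardinal | ∃ C ⊆ J, (∀ A ∈ J, ∃ B ∈ C, A ⊆ B) ∧ Cardinal.mk C = c }

/-!
Upper bound: every set of σ-finite measure lies in a countable union of measurable sets of finite
measure, and as the Borel σ-algebra of `ℝⁿ` is countably generated there are at most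
`𝔠 ^ ℵ₀ = 𝔠` such unions.

Lower bound: a set of σ-finite measure contains only countably many members of a disjoint family
of measurable sets of positive measure, so it suffices to find `𝔠` disjoint compact sets `K t`,
`t : ℕ → Bool`, with `0 < μH[r] (K t) < ∞`. Take `2M` points `q (j, b)` of the integer lattice,
`1`-separated and of norm `O(M^{1/n})`, and `l` with `l ^ r = 1 / M`. Since `r < n`,
`M^{1/n} l → 0`, so two series `∑ lᵏ q (aₖ, tₖ)` whose digits first differ at `k` lie at distance
`≍ lᵏ`. Let `K t` be the set of these sums, `a : ℕ → Fin M` being free. Covering `K t` by `Mᵏ`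
pieces of diameter `O(lᵏ)` bounds `μH[r] (K t)`; reading `a` as base-`M` digits maps `K t` onto
`[0, 1]` by an `r`-Hölder map, which forces `μH[r] (K t) > 0`.
-/

open Function
open scoped Cardinal NNReal

universe u

theorem cofOf_le_mk {α : Type*} {J C : Set (Set α)} (hCJ : C ⊆ J)
    (hC : ∀ A ∈ J, ∃ B ∈ C, A ⊆ B) : cofOf J ≤ #C :=
  csInf_le' ⟨C, hCJ, hC, rfl⟩

theorem mk_le_cofOf {α ι : Type u} {J : Set (Set α)} (f : ι → Set α) (hfJ : ∀ i, f i ∈ J)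
    (hf : ∀ B ∈ J, {i | f i ⊆ B}.Countable) (hι : ℵ₀ < #ι) : #ι ≤ cofOf J := by
  refine le_csInf ⟨_, J, subset_rfl, fun A hA => ⟨A, hA, subset_rfl⟩, rfl⟩ ?_
  rintro _ ⟨C, hCJ, hC, rfl⟩
  choose Φ hΦ using fun i => hC (f i) (hfJ i)
  have hfiber (B : C) : #((fun i => (⟨Φ i, (hΦ i).1⟩ : C)) ⁻¹' {B}) ≤ ℵ₀ := by
    refine Cardinal.le_aleph0_iff_set_countable.2 ((hf B (hCJ B.2)).mono ?_)
    rintro i rfl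
    exact (hΦ i).2
  by_contra! hCι
  exact not_lt_of_ge (Cardinal.mk_le_mk_mul_of_mk_preimage_le _ hfiber)
    (Cardinal.mul_lt_of_lt hι.le hCι hι)

theorem MeasurableSpace.mk_setOf_measurableSet_le_continuum {X : Type*} [MeasurableSpace X]
    [MeasurableSpace.CountablyGenerated X] : #{s : Set X | MeasurableSet s} ≤ 𝔠 := by
  have := MeasurableSpace.cardinal_measurableSet_le_continuum
    ((countable_countableGeneratingSet (α := X)).le_aleph0.trans Cardinal.aleph0_le_continuum)
  rwa [generateFrom_countableGeneratingSet] at this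

namespace MeasureTheory.Measure

variable {X : Type u} [MeasurableSpace X] (μ : Measure X)

def IsSigmaFiniteSet (H : Set X) : Prop :=
  ∃ A : ℕ → Set X, H = ⋃ k, A k ∧ ∀ k, μ (A k) < ⊤

variable {μ}

theorem IsSigmaFiniteSet.countable_setOf_subset {ι : Type*} {K : ι → Set X}
    (hK : ∀ i, MeasurableSet (K i)) (hKd : Pairwise (Disjoint on K)) (hKμ : ∀ i, 0 < μ (K i))
    {S : Set X} (hS : μ.IsSigmaFiniteSet S) : {i | K i ⊆ S}.Countable := by
  obtain ⟨A, rfl, hA⟩ := hS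
  have hsub : {i | K i ⊆ ⋃ k, A k} ⊆ ⋃ k, {i | 0 < μ.restrict (A k) (K i)} := by
    intro i hi
    by_contra! h
    simp only [mem_iUnion, mem_ofPred_eq, not_exists, not_lt, nonpos_iff_eq_zero,
      Measure.restrict_apply (hK i)] at h
    refine (hKμ i).ne' (measure_mono_null (fun x hx => ?_) (measure_iUnion_null h))
    obtain ⟨k, hk⟩ := mem_iUnion.1 (hi hx)
    exact mem_iUnion.2 ⟨k, hx, hk⟩
  refine .mono hsub (countable_iUnion fun k =>
    countable_meas_pos_of_disjoint_of_meas_iUnion_ne_top _ hK hKd ?_)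
  rw [← lt_top_iff_ne_top]
  exact (measure_mono (subset_univ _)).trans_lt (by rw [Measure.restrict_apply_univ]; exact hA k)

variable (μ) in
theorem cofOf_setOf_isSigmaFiniteSet_le_continuum [MeasurableSpace.CountablyGenerated X] :
    cofOf {H | μ.IsSigmaFiniteSet H} ≤ 𝔠 := by
  set S := {s : Set X | MeasurableSet s ∧ μ s < ⊤}
  let U : (ℕ → S) → Set X := fun g => ⋃ k, (g k : Set X)
  have hrange : range U ⊆ {H | μ.IsSigmaFiniteSet H} := by
    rintro _ ⟨g, rfl⟩
    exact ⟨fun k => g k, rfl, fun k => (g k).2.2⟩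
  have hcofinal : ∀ H ∈ {H | μ.IsSigmaFiniteSet H}, ∃ B ∈ range U, H ⊆ B := by
    rintro _ ⟨A, rfl, hA⟩
    refine ⟨U fun k => ⟨toMeasurable μ (A k), measurableSet_toMeasurable _ _, ?_⟩, ⟨_, rfl⟩,
      iUnion_mono fun k => subset_toMeasurable _ _⟩
    rw [measure_toMeasurable]
    exact hA k
  have hS : #S ≤ 𝔠 := (Cardinal.mk_le_mk_of_subset fun _ hs => hs.1).trans
    MeasurableSpace.mk_setOf_measurableSet_le_continuum
  calc cofOf {H | μ.IsSigmaFiniteSet H} ≤ #(range U) := cofOf_le_mk hrange hcofinal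
    _ ≤ #(ℕ → S) := Cardinal.mk_range_le
    _ = #S ^ ℵ₀ := by simp
    _ ≤ 𝔠 ^ ℵ₀ := Cardinal.power_le_power_right hS
    _ = 𝔠 := Cardinal.continuum_power_aleph0

variable (μ) in
theorem mk_le_cofOf_setOf_isSigmaFiniteSet {ι : Type u} {K : ι → Set X}
    (hK : ∀ i, MeasurableSet (K i)) (hKd : Pairwise (Disjoint on K))
    (hKμ : ∀ i, 0 < μ (K i) ∧ μ (K i) < ⊤) (hι : ℵ₀ < #ι) :
    #ι ≤ cofOf {H | μ.IsSigmaFiniteSet H} :=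
  mk_le_cofOf K (fun i => ⟨fun _ => K i, (iUnion_const _).symm, fun _ => (hKμ i).2⟩)
    (fun _ hS => hS.countable_setOf_subset hK hKd fun i => (hKμ i).1) hι

end MeasureTheory.Measure

theorem sigmaFiniteHausdorff_eq (n : ℕ) (r : ℝ) :
    SigmaFiniteHausdorff n r = (μH[r] : Measure (EuclideanSpace ℝ (Fin n))).IsSigmaFiniteSet :=
  rfl

section CodingMap

variable {E α : Type*} [NormedAddCommGroup E] [NormedSpace ℝ E]
  {q : α → E} {R l : ℝ}

def codingMap (l : ℝ) (q : α → E) (x : ℕ → α) : E := ∑' i, l ^ i • q (x i)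

theorem norm_pow_smul_le (hq : ∀ a, ‖q a‖ ≤ R) (hl0 : 0 ≤ l) (x : ℕ → α) (i : ℕ) :
    ‖l ^ i • q (x i)‖ ≤ R * l ^ i := by
  rw [norm_smul, Real.norm_of_nonneg (pow_nonneg hl0 i), mul_comm]
  exact mul_le_mul_of_nonneg_right (hq _) (pow_nonneg hl0 i)

theorem summable_pow_smul [CompleteSpace E] (hq : ∀ a, ‖q a‖ ≤ R) (hl0 : 0 ≤ l) (hl1 : l < 1)
    (x : ℕ → α) :
    Summable fun i => l ^ i • q (x i) :=
  .of_norm_bounded ((summable_geometric_of_lt_one hl0 hl1).mul_left R)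
    (norm_pow_smul_le hq hl0 x)

theorem norm_codingMap_le (hq : ∀ a, ‖q a‖ ≤ R) (hl0 : 0 ≤ l) (hl1 : l < 1) (x : ℕ → α) :
    ‖codingMap l q x‖ ≤ R * (1 - l)⁻¹ :=
  tsum_of_norm_bounded ((hasSum_geometric_of_lt_one hl0 hl1).mul_left R)
    (norm_pow_smul_le hq hl0 x)

theorem codingMap_eq_sum_add [CompleteSpace E] (hq : ∀ a, ‖q a‖ ≤ R) (hl0 : 0 ≤ l)
    (hl1 : l < 1) (x : ℕ → α) (k : ℕ) :
    codingMap l q x = ∑ i ∈ Finset.range k, l ^ i • q (x i) +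
      l ^ k • codingMap l q (fun i => x (i + k)) := by
  rw [codingMap, ← (summable_pow_smul hq hl0 hl1 x).sum_add_tsum_nat_add k, codingMap,
    ← tsum_const_smul'']
  simp_rw [smul_smul, pow_add, mul_comm]

theorem codingMap_sub_codingMap [CompleteSpace E] (hq : ∀ a, ‖q a‖ ≤ R) (hl0 : 0 ≤ l)
    (hl1 : l < 1) {x y : ℕ → α} {k : ℕ} (hxy : ∀ i < k, x i = y i) :
    codingMap l q x - codingMap l q y =
      l ^ k • (codingMap l q (fun i => x (i + k)) - codingMap l q (fun i => y (i + k))) := by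
  rw [codingMap_eq_sum_add hq hl0 hl1 x k, codingMap_eq_sum_add hq hl0 hl1 y k,
    Finset.sum_congr rfl fun i hi => by rw [hxy i (Finset.mem_range.1 hi)], smul_sub]
  abel

theorem dist_codingMap_le (hq : ∀ a, ‖q a‖ ≤ R) (hl0 : 0 ≤ l) (hl1 : l < 1) (x y : ℕ → α) :
    dist (codingMap l q x) (codingMap l q y) ≤ 2 * R * (1 - l)⁻¹ :=
  calc _ ≤ ‖codingMap l q x‖ + ‖codingMap l q y‖ := dist_le_norm_add_norm _ _
    _ ≤ R * (1 - l)⁻¹ + R * (1 - l)⁻¹ :=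
        add_le_add (norm_codingMap_le hq hl0 hl1 x) (norm_codingMap_le hq hl0 hl1 y)
    _ = 2 * R * (1 - l)⁻¹ := by ring

theorem dist_codingMap_le_mul_pow [CompleteSpace E] (hq : ∀ a, ‖q a‖ ≤ R) (hl0 : 0 ≤ l)
    (hl1 : l < 1) {x y : ℕ → α} {k : ℕ} (hxy : ∀ i < k, x i = y i) :
    dist (codingMap l q x) (codingMap l q y) ≤ 2 * R * (1 - l)⁻¹ * l ^ k := by
  rw [dist_eq_norm, codingMap_sub_codingMap hq hl0 hl1 hxy, norm_smul,
    Real.norm_of_nonneg (pow_nonneg hl0 k), mul_comm, ← dist_eq_norm]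
  gcongr
  exact dist_codingMap_le hq hl0 hl1 _ _

theorem mul_pow_le_dist_codingMap [CompleteSpace E] (hq : ∀ a, ‖q a‖ ≤ R) (hl0 : 0 ≤ l)
    (hl1 : l < 1) (hsep : Pairwise fun a b => 1 ≤ dist (q a) (q b))
    {x y : ℕ → α} {k : ℕ} (hxy : ∀ i < k, x i = y i) (hk : x k ≠ y k) :
    (1 - 2 * R * (1 - l)⁻¹ * l) * l ^ k ≤ dist (codingMap l q x) (codingMap l q y) := by
  rw [dist_eq_norm, codingMap_sub_codingMap hq hl0 hl1 hxy, norm_smul,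
    Real.norm_of_nonneg (pow_nonneg hl0 k), mul_comm]
  gcongr
  set u := q (x k) - q (y k)
  set v := codingMap l q (fun i => x (i + 1 + k)) - codingMap l q (fun i => y (i + 1 + k))
  have hsplit : codingMap l q (fun i => x (i + k)) - codingMap l q (fun i => y (i + k)) =
      u + l • v := by
    rw [codingMap_eq_sum_add hq hl0 hl1 (fun i => x (i + k)) 1,
      codingMap_eq_sum_add hq hl0 hl1 (fun i => y (i + k)) 1]
    simp only [Finset.sum_range_one, pow_zero, one_smul, zero_add, pow_one, u, v, smul_sub]
    abel
  have hu : 1 ≤ ‖u‖ := by rw [← dist_eq_norm]; exact hsep hk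
  have hv : ‖v‖ ≤ 2 * R * (1 - l)⁻¹ := by
    rw [← dist_eq_norm]
    exact dist_codingMap_le hq hl0 hl1 _ _
  rw [hsplit]
  calc 1 - 2 * R * (1 - l)⁻¹ * l ≤ ‖u‖ - ‖l • v‖ := by
        rw [norm_smul, Real.norm_of_nonneg hl0]; nlinarith
    _ ≤ ‖u + l • v‖ := by simpa using norm_sub_norm_le u (-(l • v))

theorem continuous_codingMap [CompleteSpace E] [TopologicalSpace α] [DiscreteTopology α]
    (hq : ∀ a, ‖q a‖ ≤ R) (hl0 : 0 ≤ l) (hl1 : l < 1) : Continuous (codingMap l q) :=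
  continuous_tsum
    (fun i => (continuous_of_discreteTopology.comp (continuous_apply i)).const_smul _)
    ((summable_geometric_of_lt_one hl0 hl1).mul_left R) fun i x => norm_pow_smul_le hq hl0 x i

end CodingMap

theorem HolderOnWith.of_dist_le {X Y : Type*} [PseudoMetricSpace X] [PseudoMetricSpace Y]
    {C r : ℝ≥0} {f : X → Y} {s : Set X}
    (h : ∀ x ∈ s, ∀ y ∈ s, dist (f x) (f y) ≤ C * dist x y ^ (r : ℝ)) :
    HolderOnWith C r f s := by
  intro x hx y hy
  rw [edist_nndist, edist_nndist, ← ENNReal.coe_rpow_of_nonneg _ r.coe_nonneg,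
    ← ENNReal.coe_mul, ENNReal.coe_le_coe, ← NNReal.coe_le_coe]
  push_cast
  exact h x hx y hy

section CodeSpace

open Filter Topology

variable {X : Type*} [MetricSpace X] {M : ℕ} {G : (ℕ → Fin M) → X} {A B l r : ℝ}

theorem abs_ofDigits_sub_ofDigits_le_mul_dist_rpow (hr : 0 < r) (hl0 : 0 < l) (hB : 0 < B)
    (hlr : l ^ r = (M : ℝ)⁻¹)
    (hG : ∀ a b k, (∀ i < k, a i = b i) → a k ≠ b k → B * l ^ k ≤ dist (G a) (G b))
    (a b : ℕ → Fin M) :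
    |Real.ofDigits a - Real.ofDigits b| ≤ (B ^ r)⁻¹ * dist (G a) (G b) ^ r := by
  rcases eq_or_ne a b with rfl | hab
  · simp [Real.zero_rpow hr.ne']
  have hagree : ∀ i < PiNat.firstDiff a b, a i = b i := fun _ => PiNat.apply_eq_of_lt_firstDiff
  calc |Real.ofDigits a - Real.ofDigits b|
      ≤ ((M : ℝ) ^ PiNat.firstDiff a b)⁻¹ := Real.abs_ofDigits_sub_ofDigits_le hagree
    _ = (B ^ r)⁻¹ * (B * l ^ PiNat.firstDiff a b) ^ r := by
        rw [Real.mul_rpow hB.le (by positivity), ← Real.rpow_pow_comm hl0.le, hlr, inv_pow]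
        have : 0 < B ^ r := by positivity
        field_simp
    _ ≤ (B ^ r)⁻¹ * dist (G a) (G b) ^ r := by
        gcongr
        exact hG a b _ hagree (PiNat.apply_firstDiff_ne hab)

variable [MeasurableSpace X] [BorelSpace X]

theorem hausdorffMeasure_range_le_of_dist_le_mul_pow (hr : 0 ≤ r) (hl0 : 0 ≤ l) (hl1 : l < 1)
    (hA : 0 ≤ A) (hM : M ≠ 0) (hlr : l ^ r = (M : ℝ)⁻¹)
    (hG : ∀ a b k, (∀ i < k, a i = b i) → dist (G a) (G b) ≤ A * l ^ k) :
    μH[r] (range G) ≤ ENNReal.ofReal (A ^ r) := by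
  let P (k : ℕ) (w : Fin k → Fin M) : Set X := G '' {a | ∀ i : Fin k, a i = w i}
  have hdiam (k : ℕ) (w : Fin k → Fin M) :
      Metric.ediam (P k w) ≤ ENNReal.ofReal (A * l ^ k) := by
    refine Metric.ediam_le ?_
    rintro _ ⟨a, ha, rfl⟩ _ ⟨b, hb, rfl⟩
    rw [edist_dist]
    exact ENNReal.ofReal_le_ofReal (hG a b k fun i hi => (ha ⟨i, hi⟩).trans (hb ⟨i, hi⟩).symm)
  have hcover (k : ℕ) : range G ⊆ ⋃ w, P k w := by
    rintro _ ⟨a, rfl⟩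
    exact mem_iUnion.2 ⟨fun i => a i, a, fun i => rfl, rfl⟩
  have hlim : Tendsto (fun k => ENNReal.ofReal (A * l ^ k)) atTop (𝓝 0) := by
    simpa using ENNReal.tendsto_ofReal
      ((tendsto_pow_atTop_nhds_zero_of_lt_one hl0 hl1).const_mul A)
  have hsum (k : ℕ) : ∑ w, Metric.ediam (P k w) ^ r ≤ ENNReal.ofReal (A ^ r) :=
    calc ∑ w, Metric.ediam (P k w) ^ r
        ≤ ∑ _w : Fin k → Fin M, ENNReal.ofReal (A * l ^ k) ^ r :=
          Finset.sum_le_sum fun w _ => ENNReal.rpow_le_rpow (hdiam k w) hr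
      _ = ENNReal.ofReal (M ^ k • (A * l ^ k) ^ r) := by
          rw [Finset.sum_const, Finset.card_univ, Fintype.card_fun, Fintype.card_fin,
            Fintype.card_fin, ENNReal.ofReal_nsmul,
            ENNReal.ofReal_rpow_of_nonneg (by positivity) hr]
      _ = ENNReal.ofReal (A ^ r) := by
          have : (M : ℝ) ≠ 0 := by exact_mod_cast hM
          rw [nsmul_eq_mul, Real.mul_rpow hA (pow_nonneg hl0 k), ← Real.rpow_pow_comm hl0, hlr,
            inv_pow, Nat.cast_pow, mul_left_comm, mul_inv_cancel₀ (pow_ne_zero k this), mul_one]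
  exact (Measure.hausdorffMeasure_le_liminf_sum r _ _ hlim P (.of_forall fun k => hdiam k)
    (.of_forall hcover)).trans (liminf_le_of_frequently_le' (.of_forall hsum))

theorem hausdorffMeasure_range_pos_of_mul_pow_le_dist (hr : 0 < r) (hl0 : 0 < l) (hB : 0 < B)
    (hM : 1 < M) (hlr : l ^ r = (M : ℝ)⁻¹)
    (hG : ∀ a b k, (∀ i < k, a i = b i) → a k ≠ b k → B * l ^ k ≤ dist (G a) (G b)) :
    0 < μH[r] (range G) := by
  have hinj : Injective G := fun a b hab => by
    by_contra h
    have := hG a b _ (fun _ => PiNat.apply_eq_of_lt_firstDiff) (PiNat.apply_firstDiff_ne h)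
    rw [hab, dist_self] at this
    exact this.not_gt (by positivity)
  have hdist := abs_ofDigits_sub_ofDigits_le_mul_dist_rpow hr hl0 hB hlr hG
  have : Nonempty (Fin M) := ⟨⟨0, by omega⟩⟩
  lift r to ℝ≥0 using hr.le
  lift B to ℝ≥0 using hB.le
  let φ : X → ℝ := fun x => Real.ofDigits (invFun G x)
  have hφG (a) : φ (G a) = Real.ofDigits a := by simp only [φ, leftInverse_invFun hinj a]
  have hφ : HolderOnWith (B ^ (r : ℝ))⁻¹ r φ (range G) := by
    refine .of_dist_le ?_
    rintro _ ⟨a, rfl⟩ _ ⟨b, rfl⟩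
    rw [hφG, hφG, Real.dist_eq]
    push_cast
    exact hdist a b
  have hIcc : Icc (0 : ℝ) 1 ⊆ φ '' range G := by
    intro y hy
    obtain ⟨a, -, rfl⟩ := Real.ofDigits_SurjOn hM hy
    exact ⟨G a, mem_range_self a, hφG a⟩
  have := (measure_mono hIcc).trans
    (hφ.hausdorffMeasure_image_le (by exact_mod_cast hr) zero_le_one)
  rw [hausdorffMeasure_real, Real.volume_Icc, mul_one] at this
  refine pos_iff_ne_zero.2 fun h0 => ?_
  simp [h0] at this

end CodeSpace

section CantorFamily

variable {E : Type*} [NormedAddCommGroup E] [NormedSpace ℝ E] [CompleteSpace E]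

theorem injective_codingMap {α : Type*} {q : α → E} {R l : ℝ} (hq : ∀ a, ‖q a‖ ≤ R)
    (hl0 : 0 < l) (hl1 : l < 1) (hsep : Pairwise fun a b => 1 ≤ dist (q a) (q b))
    (hsmall : 2 * R * (1 - l)⁻¹ * l < 1) : Injective (codingMap l q) := by
  intro x y hxy
  by_contra h
  have := mul_pow_le_dist_codingMap hq hl0.le hl1 hsep
    (fun _ hi => PiNat.apply_eq_of_lt_firstDiff hi) (PiNat.apply_firstDiff_ne h)
  rw [hxy, dist_self] at this
  exact this.not_gt (mul_pos (sub_pos.2 hsmall) (pow_pos hl0 _))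

variable [MeasurableSpace E] [BorelSpace E]

theorem exists_pairwise_disjoint_hausdorffMeasure_pos_lt_top {M : ℕ} (hM : 1 < M)
    {q : Fin M × Bool → E} {R l r : ℝ} (hq : ∀ a, ‖q a‖ ≤ R)
    (hsep : Pairwise fun a b => 1 ≤ dist (q a) (q b)) (hr : 0 < r) (hl0 : 0 < l)
    (hlr : l ^ r = (M : ℝ)⁻¹) (hsmall : 2 * R * l < 1 - l) :
    ∃ K : (ℕ → Bool) → Set E, (∀ t, MeasurableSet (K t)) ∧ Pairwise (Disjoint on K) ∧
      ∀ t, 0 < μH[r] (K t) ∧ μH[r] (K t) < ⊤ := by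
  have hR : 0 ≤ R := (norm_nonneg _).trans (hq (⟨0, by omega⟩, false))
  have hl1 : l < 1 := by nlinarith
  have hsmall' : 2 * R * (1 - l)⁻¹ * l < 1 := by
    rwa [mul_right_comm, ← div_eq_mul_inv, div_lt_one (by linarith)]
  have hinj := injective_codingMap hq hl0 hl1 hsep hsmall'
  let K (t : ℕ → Bool) : Set E := range fun a : ℕ → Fin M => codingMap l q fun i => (a i, t i)
  refine ⟨K, fun t => ?_, fun t s hts => ?_, fun t => ⟨?_, ?_⟩⟩
  · have hcont : Continuous fun a : ℕ → Fin M => fun i => (a i, t i) :=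
      continuous_pi fun i => (continuous_apply i).prodMk continuous_const
    exact (isCompact_range ((continuous_codingMap hq hl0.le hl1).comp hcont)).isClosed.measurableSet
  · refine Set.disjoint_left.2 ?_
    rintro _ ⟨a, rfl⟩ ⟨b, hb⟩
    exact hts (funext fun i => congrArg Prod.snd (congrFun (hinj hb) i)).symm
  · refine hausdorffMeasure_range_pos_of_mul_pow_le_dist hr hl0 (sub_pos.2 hsmall') hM hlr
      fun a b k hab hk => ?_
    exact mul_pow_le_dist_codingMap hq hl0.le hl1 hsep (by simp_all) (by simpa using hk)
  · have hA : 0 ≤ 2 * R * (1 - l)⁻¹ :=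
      mul_nonneg (by positivity) (inv_nonneg.2 (sub_nonneg.2 hl1.le))
    refine (hausdorffMeasure_range_le_of_dist_le_mul_pow hr.le hl0.le hl1 hA (by omega) hlr
      fun a b k hab => ?_).trans_lt ENNReal.ofReal_lt_top
    exact dist_codingMap_le_mul_pow hq hl0.le hl1 (by simp_all)

end CantorFamily

section Euclidean

open Filter Topology

theorem one_le_dist_toLp_natCast {ι : Type*} [Fintype ι] {u v : ι → ℕ} (h : u ≠ v) :
    1 ≤ dist (WithLp.toLp 2 fun i => (u i : ℝ)) (WithLp.toLp 2 fun i => (v i : ℝ)) := by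
  obtain ⟨i, hi⟩ := Function.ne_iff.1 h
  calc (1 : ℝ) ≤ dist (u i) (v i) := Nat.pairwise_one_le_dist hi
    _ = dist (u i : ℝ) (v i) := (Nat.dist_cast_real _ _).symm
    _ ≤ _ := PiLp.dist_apply_le (WithLp.toLp 2 fun i => (u i : ℝ))
        (WithLp.toLp 2 fun i => (v i : ℝ)) i

theorem norm_toLp_le_sqrt_card_mul {ι : Type*} [Fintype ι] {x : ι → ℝ} {C : ℝ} (hC : 0 ≤ C)
    (hx : ∀ i, |x i| ≤ C) : ‖WithLp.toLp 2 x‖ ≤ √(Fintype.card ι) * C := by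
  rw [EuclideanSpace.norm_eq, ← Real.sqrt_sq hC, ← Real.sqrt_mul (Nat.cast_nonneg _)]
  refine Real.sqrt_le_sqrt ?_
  calc ∑ i, ‖x i‖ ^ 2 ≤ ∑ _i : ι, C ^ 2 :=
        Finset.sum_le_sum fun i _ => pow_le_pow_left₀ (norm_nonneg _) (hx i) 2
    _ = Fintype.card ι * C ^ 2 := by simp

def gridPoint (n G : ℕ) (p : Fin (G ^ n) × Bool) : EuclideanSpace ℝ (Fin n) :=
  WithLp.toLp 2 fun i => ((2 * finFunctionFinEquiv.symm p.1 i + p.2.toNat : ℕ) : ℝ)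

theorem norm_gridPoint_le (n G : ℕ) (p : Fin (G ^ n) × Bool) :
    ‖gridPoint n G p‖ ≤ √n * (2 * G) := by
  have hcoord (i : Fin n) : 2 * (finFunctionFinEquiv.symm p.1 i : ℕ) + p.2.toNat ≤ 2 * G := by
    have := (finFunctionFinEquiv.symm p.1 i).isLt
    have := Bool.toNat_le p.2
    omega
  calc ‖gridPoint n G p‖ ≤ √(Fintype.card (Fin n)) * (2 * G) :=
        norm_toLp_le_sqrt_card_mul (by positivity) fun i => by
          rw [abs_of_nonneg (Nat.cast_nonneg _)]
          exact_mod_cast hcoord i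
    _ = √n * (2 * G) := by rw [Fintype.card_fin]

theorem pairwise_one_le_dist_gridPoint {n : ℕ} (hn : n ≠ 0) (G : ℕ) :
    Pairwise fun p p' => 1 ≤ dist (gridPoint n G p) (gridPoint n G p') := by
  rintro ⟨a, b⟩ ⟨a', b'⟩ hne
  refine one_le_dist_toLp_natCast fun h => hne ?_
  have hcoord (i : Fin n) := congrFun h i
  have hb : b = b' := by
    have := hcoord ⟨0, Nat.pos_of_ne_zero hn⟩
    cases b <;> cases b' <;> simp at this ⊢ <;> omega
  subst hb
  refine Prod.ext (finFunctionFinEquiv.symm.injective (funext fun i => Fin.ext ?_)) rfl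
  have := hcoord i
  dsimp only at this ⊢
  omega

theorem eventually_mul_natCast_mul_rpow_neg_lt_one {s : ℝ} (hs : 1 < s) (C : ℝ) :
    ∀ᶠ G : ℕ in atTop, C * G * (G : ℝ) ^ (-s) < 1 := by
  have hlim : Tendsto (fun G : ℕ => C * (G : ℝ) ^ (-(s - 1))) atTop (𝓝 0) := by
    have := ((tendsto_rpow_neg_atTop (by linarith : 0 < s - 1)).comp
      tendsto_natCast_atTop_atTop).const_mul C
    rwa [mul_zero] at this
  filter_upwards [hlim.eventually_lt_const one_pos, eventually_gt_atTop 0] with G hG hG0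
  rwa [mul_assoc, ← Real.rpow_one_add' (by positivity) (by linarith),
    show 1 + -s = -(s - 1) by ring]

theorem EuclideanSpace.exists_pairwise_disjoint_hausdorffMeasure_pos_lt_top {n : ℕ} {r : ℝ}
    (hn : 1 ≤ n) (hr : 0 < r) (hrn : r < n) :
    ∃ K : (ℕ → Bool) → Set (EuclideanSpace ℝ (Fin n)), (∀ t, MeasurableSet (K t)) ∧
      Pairwise (Disjoint on K) ∧ ∀ t, 0 < μH[r] (K t) ∧ μH[r] (K t) < ⊤ := by
  obtain ⟨G, hG, hG2⟩ := ((eventually_mul_natCast_mul_rpow_neg_lt_one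
    ((one_lt_div hr).2 hrn) (5 * √n)).and (eventually_ge_atTop 2)).exists
  set l := (G : ℝ) ^ (-(n / r))
  have hl0 : 0 < l := by positivity
  have hlr : l ^ r = ((G ^ n : ℕ) : ℝ)⁻¹ := by
    rw [← Real.rpow_mul (by positivity), neg_mul, div_mul_cancel₀ _ hr.ne', Real.rpow_neg
      (by positivity), Real.rpow_natCast, Nat.cast_pow]
  have hsmall : 2 * (√n * (2 * G)) * l < 1 - l := by
    -- `2 (2 √n G) l + l ≤ 5 √n G l`, which is `< 1` by the choice of `G`
    have h1 : 1 ≤ √n * G := one_le_mul_of_one_le_of_one_le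
      (Real.one_le_sqrt.2 (by exact_mod_cast hn)) (by exact_mod_cast (by omega : 1 ≤ G))
    nlinarith
  exact _root_.exists_pairwise_disjoint_hausdorffMeasure_pos_lt_top
    (Nat.one_lt_pow (by omega) (by omega)) (norm_gridPoint_le n G)
    (pairwise_one_le_dist_gridPoint (by omega) G) hr hl0 hlr hsmall

end Euclidean

/-- `cof(I^r_{n,σ-fin}) = 𝔠 = 2^ℵ₀`. -/
theorem stmt7 (n : ℕ) (r : ℝ) (hn : 1 ≤ n) (hr0 : 0 < r) (hrn : r < n) :
    cofOf {H : Set (EuclideanSpace ℝ (Fin n)) | SigmaFiniteHausdorff n r H} =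
      Cardinal.continuum := by
  obtain ⟨K, hK, hKd, hKμ⟩ :=
    EuclideanSpace.exists_pairwise_disjoint_hausdorffMeasure_pos_lt_top hn hr0 hrn
  simp only [sigmaFiniteHausdorff_eq]
  refine le_antisymm (Measure.cofOf_setOf_isSigmaFiniteSet_le_continuum μH[r]) ?_
  calc 𝔠 = #(ℕ → Bool) := by simp
    _ ≤ _ := Measure.mk_le_cofOf_setOf_isSigmaFiniteSet μH[r] hK hKd hKμ
      (by simpa using Cardinal.aleph0_lt_continuum)
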